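/- For the explicit piecewise linear density f one has b_n < c_n for all large n and f(c_n)/f(b_n) = ln(n+1) → ∞ as n → ∞; consequently f is not almost decreasing: for every x₀ ≥ 0, sup_{x₀ ≤ x ≤ y < ∞} f(y)/f(x) = ∞. -/

import Mathlib

open MeasureTheory Filter Set

noncomputable section

/-- `a_n = 2^(n²)`. -/
def aSeq (n : ℕ) : ℝ := 2 ^ (n ^ 2)

/-- `m_n` : the least positive integer `k` with `k ≥ (√5/√6)·n`. -/
def mIdx (n : ℕ) : ℕ := max 1 ⌈(Real.sqrt 5 / Real.sqrt 6) * (n : ℝ)⌉₊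

/-- `b_n = a_n + a_{m_n}·(ln (n+1))²`. -/
def bSeq (n : ℕ) : ℝ := aSeq n + aSeq (mIdx n) * (Real.log ((n : ℝ) + 1)) ^ 2

/-- `c_n = (a_{n+1} + b_n)/2`. -/
def cSeq (n : ℕ) : ℝ := (aSeq (n + 1) + bSeq n) / 2

/-- `f` is affine (the linear interpolation of its endpoint values) on `[p, q]`. -/
def AffineOnIcc (f : ℝ → ℝ) (p q : ℝ) : Prop :=
  ∀ x ∈ Set.Icc p q, f x = f p + (x - p) / (q - p) * (f q - f p)

/-- The explicit continuous piecewise linear construction `f₀ : [0,∞) → (0,∞)`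
with `f₀(0) = 1`, `f₀(a_n) = 2 a_n⁻³`, `f₀(b_n) = 2 a_n⁻³ / ln(n+1)`,
`f₀(c_n) = 2 a_n⁻³`, affine on `[0,a₁]`, `[a_n,b_n]`, `[b_n,c_n]`, `[c_n,a_{n+1}]`. -/
def PWConstruction (f₀ : ℝ → ℝ) : Prop :=
  ContinuousOn f₀ (Set.Ici 0) ∧
  (∀ x : ℝ, 0 ≤ x → 0 < f₀ x) ∧
  f₀ 0 = 1 ∧
  (∀ n : ℕ, 1 ≤ n →
    f₀ (aSeq n) = 2 / (aSeq n) ^ 3 ∧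
    f₀ (bSeq n) = 2 / (aSeq n) ^ 3 / Real.log ((n : ℝ) + 1) ∧
    f₀ (cSeq n) = 2 / (aSeq n) ^ 3) ∧
  AffineOnIcc f₀ 0 (aSeq 1) ∧
  (∀ n : ℕ, 1 ≤ n →
    AffineOnIcc f₀ (aSeq n) (bSeq n) ∧
    AffineOnIcc f₀ (bSeq n) (cSeq n) ∧
    AffineOnIcc f₀ (cSeq n) (aSeq (n + 1)))

/-- The normalized extension `f = f₀ / ∫₀^∞ f₀(y) dy`, extended by `0` on `(-∞,0)`. -/
def normExt (f₀ : ℝ → ℝ) : ℝ → ℝ :=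
  fun x => if x < 0 then 0 else f₀ x / ∫ y in Set.Ici (0:ℝ), f₀ y

/-!
Since `f(c_n)/f(b_n) = f₀(c_n)/f₀(b_n) = ln(n+1)` and `b_n ≥ a_n ≥ n`, the ratios are unbounded
arbitrarily far out, provided the normalising constant `∫₀^∞ f₀` is nonzero (the Bochner integral
would be `0` if `f₀` were not integrable). It is positive because `f₀ > 0` is integrable: on
`[a_n, a_{n+1}]` the function `f₀` is piecewise affine between nodes of height at most `4 a_n⁻³`,
and `a_{n+1}² ≤ 64 a_n³`, so `f₀ x ≤ 256 / x²` for `x ≥ 2`.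
-/

lemma AffineOnIcc.le_of_le {f : ℝ → ℝ} {p q M x : ℝ} (h : AffineOnIcc f p q)
    (hx : x ∈ Icc p q) (hp : f p ≤ M) (hq : f q ≤ M) : f x ≤ M := by
  rw [h x hx]
  have ht0 : 0 ≤ (x - p) / (q - p) := div_nonneg (by linarith [hx.1]) (by linarith [hx.1, hx.2])
  have ht1 : (x - p) / (q - p) ≤ 1 :=
    div_le_one_of_le₀ (by linarith [hx.2]) (by linarith [hx.1, hx.2])
  nlinarith

lemma integrableOn_Ici_of_norm_le_rpow {f : ℝ → ℝ} {a R C s : ℝ} (hf : ContinuousOn f (Ici a))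
    (haR : a ≤ R) (hR : 0 < R) (hs : s < -1) (hbound : ∀ x, R ≤ x → ‖f x‖ ≤ C * x ^ s) :
    IntegrableOn f (Ici a) := by
  rw [← Icc_union_Ici_eq_Ici haR]
  refine (hf.mono Icc_subset_Ici_self).integrableOn_Icc.union ?_
  have hg : IntegrableOn (fun x : ℝ => C * x ^ s) (Ici R) := by
    rw [integrableOn_Ici_iff_integrableOn_Ioi]
    exact (integrableOn_Ioi_rpow_of_lt hs hR).const_mul C
  refine hg.mono' ((hf.mono (Ici_subset_Ici.2 haR)).aestronglyMeasurable measurableSet_Ici) ?_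
  filter_upwards [ae_restrict_mem measurableSet_Ici] with x hx using hbound x hx

lemma setIntegral_pos_of_pos {X : Type*} [MeasurableSpace X] {μ : Measure X} {f : X → ℝ}
    {s : Set X} (hs : MeasurableSet s) (hμs : μ s ≠ 0) (hf : ∀ x ∈ s, 0 < f x)
    (hfi : IntegrableOn f s μ) : 0 < ∫ x in s, f x ∂μ := by
  have hsupp : Function.support f ∩ s = s := inter_eq_right.2 fun x hx => (hf x hx).ne'
  rw [setIntegral_pos_iff_support_of_nonneg_ae
      ((ae_restrict_mem hs).mono fun x hx => (hf x hx).le) hfi, hsupp]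
  exact pos_iff_ne_zero.2 hμs

lemma normExt_div_normExt {f₀ : ℝ → ℝ} {x y : ℝ} (hI : ∫ y in Ici (0 : ℝ), f₀ y ≠ 0)
    (hx : 0 ≤ x) (hy : 0 ≤ y) : normExt f₀ y / normExt f₀ x = f₀ y / f₀ x := by
  simp only [normExt, if_neg (not_lt.2 hx), if_neg (not_lt.2 hy)]
  exact div_div_div_cancel_right₀ hI _ _

lemma Nat.one_add_sq_lt_two_pow (n : ℕ) : 1 + n ^ 2 < 2 ^ (2 * n + 1) := by
  have hsq : n ^ 2 < 2 ^ (2 * n) := by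
    rw [pow_mul']
    exact Nat.pow_lt_pow_left Nat.lt_two_pow_self two_ne_zero
  rw [pow_succ 2 (2 * n)]
  omega

lemma aSeq_pos (n : ℕ) : 0 < aSeq n := by unfold aSeq; positivity

lemma aSeq_mono : Monotone aSeq := fun _ _ h =>
  pow_le_pow_right₀ one_le_two (Nat.pow_le_pow_left h 2)

lemma natCast_le_aSeq (n : ℕ) : (n : ℝ) ≤ aSeq n := by
  have h : n ≤ 2 ^ (n ^ 2) :=
    Nat.lt_two_pow_self.le.trans (Nat.pow_le_pow_right two_pos (Nat.le_self_pow two_ne_zero n))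
  unfold aSeq
  exact_mod_cast h

lemma aSeq_succ (n : ℕ) : aSeq (n + 1) = aSeq n * 2 ^ (2 * n + 1) := by
  unfold aSeq
  rw [← pow_add]
  ring_nf

lemma aSeq_succ_sq_le (n : ℕ) : aSeq (n + 1) ^ 2 ≤ 64 * aSeq n ^ 3 := by
  unfold aSeq
  rw [← pow_mul, ← pow_mul, show (64 : ℝ) = 2 ^ 6 by norm_num, ← pow_add]
  apply pow_le_pow_right₀ one_le_two
  -- `3n² + 6 - 2(n+1)² = (n-2)²`
  zify
  nlinarith [sq_nonneg ((n : ℤ) - 2)]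

lemma exists_mem_Ico_aSeq {x : ℝ} (hx : 2 ≤ x) :
    ∃ n, 1 ≤ n ∧ x ∈ Ico (aSeq n) (aSeq (n + 1)) := by
  obtain ⟨k, hk, hxk⟩ := exists_nat_pow_near (by linarith) one_lt_two (x := x)
  have hk1 : 1 ≤ k := by
    by_contra! h
    interval_cases k
    norm_num at hxk
    linarith
  refine ⟨k.sqrt, Nat.le_sqrt'.2 (by simpa using hk1), ?_, ?_⟩
  · exact le_trans (pow_le_pow_right₀ one_le_two (Nat.sqrt_le' k)) hk
  · exact hxk.trans_le (pow_le_pow_right₀ one_le_two (Nat.lt_succ_sqrt' k))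

lemma mIdx_le {n : ℕ} (hn : 1 ≤ n) : mIdx n ≤ n := by
  refine max_le hn (Nat.ceil_le.2 ?_)
  have h56 : Real.sqrt 5 / Real.sqrt 6 ≤ 1 :=
    div_le_one_of_le₀ (Real.sqrt_le_sqrt (by norm_num)) (Real.sqrt_nonneg _)
  nlinarith [(Nat.cast_nonneg n : (0 : ℝ) ≤ n)]

lemma aSeq_le_bSeq (n : ℕ) : aSeq n ≤ bSeq n :=
  le_add_of_nonneg_right (mul_nonneg (aSeq_pos _).le (sq_nonneg _))

lemma bSeq_nonneg (n : ℕ) : 0 ≤ bSeq n := (aSeq_pos n).le.trans (aSeq_le_bSeq n)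

lemma tendsto_bSeq_atTop : Tendsto bSeq atTop atTop :=
  tendsto_atTop_mono (fun n => (natCast_le_aSeq n).trans (aSeq_le_bSeq n))
    tendsto_natCast_atTop_atTop

lemma bSeq_lt_aSeq_succ {n : ℕ} (hn : 1 ≤ n) : bSeq n < aSeq (n + 1) := by
  have hL : Real.log ((n : ℝ) + 1) ^ 2 ≤ (n : ℝ) ^ 2 := by
    have := Real.log_le_sub_one_of_pos (x := (n : ℝ) + 1) (by positivity)
    exact pow_le_pow_left₀ (Real.log_nonneg (le_add_of_nonneg_left n.cast_nonneg)) (by linarith) 2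
  have hm : aSeq (mIdx n) ≤ aSeq n := aSeq_mono (mIdx_le hn)
  have hpow : (1 : ℝ) + (n : ℝ) ^ 2 < 2 ^ (2 * n + 1) := by
    exact_mod_cast Nat.one_add_sq_lt_two_pow n
  calc bSeq n ≤ aSeq n * (1 + (n : ℝ) ^ 2) := by
        unfold bSeq
        nlinarith [mul_le_mul hm hL (sq_nonneg _) (aSeq_pos n).le]
    _ < aSeq n * 2 ^ (2 * n + 1) := mul_lt_mul_of_pos_left hpow (aSeq_pos n)
    _ = aSeq (n + 1) := (aSeq_succ n).symm

lemma bSeq_lt_cSeq {n : ℕ} (hn : 1 ≤ n) : bSeq n < cSeq n := by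
  have := bSeq_lt_aSeq_succ hn
  unfold cSeq
  linarith

namespace PWConstruction

variable {f₀ : ℝ → ℝ}

lemma le_of_mem_Icc_aSeq (hf : PWConstruction f₀) {n : ℕ} (hn : 1 ≤ n) {x : ℝ}
    (hx : x ∈ Icc (aSeq n) (aSeq (n + 1))) :
    f₀ x ≤ 4 / aSeq n ^ 3 := by
  obtain ⟨-, -, -, hval, -, haff⟩ := hf
  obtain ⟨hfa, hfb, hfc⟩ := hval n hn
  obtain ⟨hab, hbc, hca⟩ := haff n hn
  have ha3 : 0 < aSeq n ^ 3 := pow_pos (aSeq_pos n) 3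
  have h24 : 2 / aSeq n ^ 3 ≤ 4 / aSeq n ^ 3 := by gcongr; norm_num
  have hL : 1 / 2 ≤ Real.log ((n : ℝ) + 1) := by
    have h2 : Real.log 2 ≤ Real.log ((n : ℝ) + 1) :=
      Real.log_le_log two_pos (by norm_cast; omega)
    linarith [Real.log_two_gt_d9]
  have hMb : f₀ (bSeq n) ≤ 4 / aSeq n ^ 3 := calc
    f₀ (bSeq n) = 2 / aSeq n ^ 3 / Real.log ((n : ℝ) + 1) := hfb
    _ ≤ 2 / aSeq n ^ 3 / (1 / 2) := div_le_div_of_nonneg_left (by positivity) (by norm_num) hL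
    _ = 4 / aSeq n ^ 3 := by ring
  have hMa' : f₀ (aSeq (n + 1)) ≤ 4 / aSeq n ^ 3 := by
    rw [(hval (n + 1) (by omega)).1]
    refine le_trans (div_le_div_of_nonneg_left zero_le_two ha3 ?_) h24
    exact pow_le_pow_left₀ (aSeq_pos n).le (aSeq_mono n.le_succ) 3
  rcases le_total x (bSeq n) with h1 | h1
  · exact hab.le_of_le ⟨hx.1, h1⟩ (hfa.le.trans h24) hMb
  rcases le_total x (cSeq n) with h2 | h2
  · exact hbc.le_of_le ⟨h1, h2⟩ hMb (hfc.le.trans h24)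
  · exact hca.le_of_le ⟨h2, hx.2⟩ (hfc.le.trans h24) hMa'

lemma le_div_sq (hf : PWConstruction f₀) {x : ℝ} (hx : 2 ≤ x) : f₀ x ≤ 256 / x ^ 2 := by
  obtain ⟨n, hn, hxn⟩ := exists_mem_Ico_aSeq hx
  have hx2 : x ^ 2 ≤ 64 * aSeq n ^ 3 :=
    (pow_le_pow_left₀ (by linarith) hxn.2.le 2).trans (aSeq_succ_sq_le n)
  calc f₀ x ≤ 4 / aSeq n ^ 3 := hf.le_of_mem_Icc_aSeq hn (Ico_subset_Icc_self hxn)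
    _ = 256 / (64 * aSeq n ^ 3) := by field_simp; norm_num
    _ ≤ 256 / x ^ 2 := div_le_div_of_nonneg_left (by norm_num) (by positivity) hx2

lemma integrableOn (hf : PWConstruction f₀) : IntegrableOn f₀ (Ici 0) := by
  refine integrableOn_Ici_of_norm_le_rpow hf.1 zero_le_two two_pos
    (by norm_num : (-2 : ℝ) < -1) (C := 256) fun x hx => ?_
  rw [Real.norm_of_nonneg (hf.2.1 x (by linarith)).le, Real.rpow_neg (by linarith),
    Real.rpow_two, ← div_eq_mul_inv]
  exact hf.le_div_sq hx

lemma integral_pos (hf : PWConstruction f₀) : 0 < ∫ y in Ici (0 : ℝ), f₀ y :=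
  setIntegral_pos_of_pos measurableSet_Ici (by simp) hf.2.1 hf.integrableOn

lemma apply_cSeq_div_apply_bSeq (hf : PWConstruction f₀) {n : ℕ} (hn : 1 ≤ n) :
    f₀ (cSeq n) / f₀ (bSeq n) = Real.log ((n : ℝ) + 1) := by
  obtain ⟨-, hfb, hfc⟩ := hf.2.2.2.1 n hn
  rw [hfb, hfc, div_div_cancel₀ (by have := aSeq_pos n; positivity)]

end PWConstruction

theorem pw_density_not_almost_decreasing (f₀ : ℝ → ℝ)
    (hf₀ : PWConstruction f₀) :
    (∀ᶠ n in atTop, bSeq n < cSeq n) ∧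
    (∀ n : ℕ, 1 ≤ n →
      normExt f₀ (cSeq n) / normExt f₀ (bSeq n) = Real.log ((n : ℝ) + 1)) ∧
    Tendsto (fun n : ℕ => normExt f₀ (cSeq n) / normExt f₀ (bSeq n)) atTop atTop ∧
    -- f is not almost decreasing: for every x₀ ≥ 0 the sup of the ratios is ∞
    (∀ x₀ : ℝ, 0 ≤ x₀ → ∀ C : ℝ,
      ∃ x y : ℝ, x₀ ≤ x ∧ x ≤ y ∧ C < normExt f₀ y / normExt f₀ x) := by
  have hratio : ∀ n : ℕ, 1 ≤ n →
      normExt f₀ (cSeq n) / normExt f₀ (bSeq n) = Real.log ((n : ℝ) + 1) := fun n hn => by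
    rw [normExt_div_normExt hf₀.integral_pos.ne' (bSeq_nonneg n)
      ((bSeq_nonneg n).trans (bSeq_lt_cSeq hn).le), hf₀.apply_cSeq_div_apply_bSeq hn]
  have hlog : Tendsto (fun n : ℕ => Real.log ((n : ℝ) + 1)) atTop atTop :=
    Real.tendsto_log_atTop.comp (tendsto_atTop_add_const_right _ 1 tendsto_natCast_atTop_atTop)
  refine ⟨eventually_atTop.2 ⟨1, fun n hn => bSeq_lt_cSeq hn⟩, hratio,
    hlog.congr' (eventually_atTop.2 ⟨1, fun n hn => (hratio n hn).symm⟩), ?_⟩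
  intro x₀ _ C
  obtain ⟨n, ⟨hn, hx₀⟩, hC⟩ := (((eventually_ge_atTop 1).and
    (tendsto_bSeq_atTop.eventually_ge_atTop x₀)).and (hlog.eventually_gt_atTop C)).exists
  exact ⟨bSeq n, cSeq n, hx₀, (bSeq_lt_cSeq hn).le, (hratio n hn).symm ▸ hC⟩
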